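/- arXiv:1701.08069 — 3 statements merged into one kernel-verified Lean document; each statement's English description precedes it below -/
import Mathlib

section
/- Let $X$ be a real random variable with $\mathbb{E}[X]=0$, $\mathbb{E}[X^2]=1/2$, and $\mathbb{E}|X|^3 \leq \theta$. For $C>0$ define $Y^C = X\mathbf{1}_{|X|\leq C} - \mathbb{E}[X\mathbf{1}_{|X|\leq C}]$. Then $|1 - 2\mathbb{E}[(Y^C)^2]| \leq 4\theta/C$. In particular, if $C > 8\theta$ then $\mathbb{E}[(Y^C)^2] > 1/4$. -/
open MeasureTheory

/-- Truncation variance estimate: if `X` is a real random variable, centered with variance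
`1/2` and third absolute moment bounded by `θ`, and `Y^C` is the centered truncation at
level `C`, then `|1 - 2 E[(Y^C)²]| ≤ 4θ/C`, and in particular `E[(Y^C)²] > 1/4` if `C > 8θ`. -/
theorem truncation_variance_estimate {Ω : Type*} [MeasurableSpace Ω] (μ : Measure Ω)
    [IsProbabilityMeasure μ] (X : Ω → ℝ) (hX : AEMeasurable X μ)
    (θ C : ℝ) (hθ : 0 < θ) (hC : 0 < C)
    (h0 : ∫ ω, X ω ∂μ = 0)
    (h2 : ∫ ω, (X ω) ^ 2 ∂μ = 1 / 2)
    (h3i : Integrable (fun ω => |X ω| ^ 3) μ)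
    (h3 : ∫ ω, |X ω| ^ 3 ∂μ ≤ θ) :
    |1 - 2 * ∫ ω, ((if |X ω| ≤ C then X ω else 0) -
        ∫ ω', (if |X ω'| ≤ C then X ω' else 0) ∂μ) ^ 2 ∂μ| ≤ 4 * θ / C ∧
      (C > 8 * θ →
        (∫ ω, ((if |X ω| ≤ C then X ω else 0) -
          ∫ ω', (if |X ω'| ≤ C then X ω' else 0) ∂μ) ^ 2 ∂μ) > 1 / 4) := by
  set T : Ω → ℝ := fun ω => if |X ω| ≤ C then X ω else 0 with hT
  set U : Ω → ℝ := fun ω => if |X ω| ≤ C then 0 else X ω with hU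
  have hae := hX.ae_eq_mk
  have hX'm := hX.measurable_mk
  -- measurability
  have hTm : AEStronglyMeasurable T μ := by
    have hm : Measurable (fun ω => if |(hX.mk X) ω| ≤ C then (hX.mk X) ω else 0) :=
      Measurable.ite (measurableSet_le hX'm.abs measurable_const) hX'm measurable_const
    exact hm.aestronglyMeasurable.congr (hae.mono fun ω h => by simp [hT, ← h])
  have hUm : AEStronglyMeasurable U μ := by
    have hm : Measurable (fun ω => if |(hX.mk X) ω| ≤ C then 0 else (hX.mk X) ω) :=
      Measurable.ite (measurableSet_le hX'm.abs measurable_const) measurable_const hX'm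
    exact hm.aestronglyMeasurable.congr (hae.mono fun ω h => by simp [hU, ← h])
  -- integrabilities
  have hXint : Integrable X μ := by
    refine Integrable.mono' ((integrable_const 1).add h3i) hX.aestronglyMeasurable ?_
    filter_upwards with ω
    have h1 : (0:ℝ) ≤ |X ω| := abs_nonneg _
    simp only [Real.norm_eq_abs, Pi.add_apply]
    nlinarith [sq_nonneg (|X ω| - 1), sq_nonneg (|X ω| + 1)]
  have hX2int : Integrable (fun ω => (X ω) ^ 2) μ := by
    refine Integrable.mono' ((integrable_const 1).add h3i) (hX.pow_const 2).aestronglyMeasurable ?_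
    filter_upwards with ω
    have h1 : (0:ℝ) ≤ |X ω| := abs_nonneg _
    have h2' : |X ω| ^ 2 = X ω ^ 2 := sq_abs _
    simp only [Real.norm_eq_abs, Pi.add_apply, abs_pow, abs_abs]
    nlinarith [sq_nonneg (|X ω| - 1)]
  have hTint : Integrable T μ := by
    refine Integrable.mono' (integrable_const C) hTm ?_
    filter_upwards with ω
    simp only [hT, Real.norm_eq_abs]
    split
    · next h => exact h
    · simpa using hC.le
  have hT2int : Integrable (fun ω => T ω ^ 2) μ := by
    refine Integrable.mono' (integrable_const (C ^ 2)) (hTm.pow 2) ?_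
    filter_upwards with ω
    simp only [hT, Real.norm_eq_abs]
    rw [abs_pow, ← sq_abs]
    split
    · next h => exact pow_le_pow_left₀ (abs_nonneg _) (by simpa using h) 2
    · simp; positivity
  have hUint : Integrable U μ := by
    refine Integrable.mono' hXint.abs hUm ?_
    filter_upwards with ω
    simp only [hU, Real.norm_eq_abs]
    split
    · simpa using abs_nonneg _
    · simp [abs_abs]
  have hU2int : Integrable (fun ω => U ω ^ 2) μ := by
    refine Integrable.mono' hX2int (hUm.pow 2) ?_
    filter_upwards with ω
    simp only [hU, Real.norm_eq_abs]
    rw [abs_pow, ← sq_abs, sq_abs]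
    split
    · simpa using sq_nonneg (X ω)
    · simp [sq_abs]
  set m : ℝ := ∫ ω, T ω ∂μ with hm
  set mU : ℝ := ∫ ω, U ω ∂μ with hmU
  set A : ℝ := ∫ ω, U ω ^ 2 ∂μ with hA
  -- X = T + U
  have hsum : m + mU = 0 := by
    rw [hm, hmU, ← integral_add hTint hUint]
    rw [← h0]
    congr 1; funext ω
    simp only [hT, hU]; split <;> simp
  -- X² = T² + U²
  have hsq : (∫ ω, T ω ^ 2 ∂μ) + A = 1 / 2 := by
    rw [hA, ← integral_add hT2int hU2int, ← h2]
    congr 1; funext ω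
    simp only [hT, hU]; split <;> simp
  -- A bounds
  have hA0 : 0 ≤ A := integral_nonneg fun ω => sq_nonneg _
  have hAθ : A ≤ θ / C := by
    have hle : A ≤ ∫ ω, |X ω| ^ 3 / C ∂μ := by
      refine integral_mono hU2int (h3i.div_const C) fun ω => ?_
      simp only [hU]
      split
      · next => simp; positivity
      · next h =>
        push_neg at h
        rw [le_div_iff₀ hC, ← sq_abs]
        nlinarith [abs_nonneg (X ω), sq_nonneg (X ω)]
    calc A ≤ ∫ ω, |X ω| ^ 3 / C ∂μ := hle
      _ = (∫ ω, |X ω| ^ 3 ∂μ) / C := integral_div C _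
      _ ≤ θ / C := by gcongr
  -- expansion lemma
  have expand : ∀ (f : Ω → ℝ), Integrable f μ → Integrable (fun ω => f ω ^ 2) μ →
      ∫ ω, (f ω - ∫ ω', f ω' ∂μ) ^ 2 ∂μ = (∫ ω, f ω ^ 2 ∂μ) - (∫ ω', f ω' ∂μ) ^ 2 := by
    intro f hf hf2
    set c := ∫ ω', f ω' ∂μ
    have : (fun ω => (f ω - c) ^ 2) = fun ω => f ω ^ 2 - (2 * c * f ω - c ^ 2) := by
      funext ω; ring
    have h1 : ∫ ω, (2 * c * f ω - c ^ 2) ∂μ = c ^ 2 := by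
      rw [integral_sub (hf.const_mul (2 * c)) (integrable_const _), integral_const_mul,
        integral_const]
      simp; ring
    have hsub : Integrable (fun ω => 2 * c * f ω - c ^ 2) μ :=
      (hf.const_mul (2 * c)).sub (integrable_const _)
    rw [this, integral_sub hf2 hsub, h1]
  have hV : ∫ ω, (T ω - m) ^ 2 ∂μ = (∫ ω, T ω ^ 2 ∂μ) - m ^ 2 := expand T hTint hT2int
  have hVU : 0 ≤ A - mU ^ 2 := by
    rw [← expand U hUint hU2int]
    exact integral_nonneg fun ω => sq_nonneg _
  have hm2 : m ^ 2 = mU ^ 2 := by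
    have : m = -mU := by linarith
    rw [this]; ring
  have key : ∫ ω, (T ω - m) ^ 2 ∂μ = 1 / 2 - A - mU ^ 2 := by
    rw [hV, hm2]; linarith
  have hmU2 : mU ^ 2 ≤ θ / C := le_trans (by linarith) hAθ
  have hmU0 : 0 ≤ mU ^ 2 := sq_nonneg _
  have hθC : 0 ≤ θ / C := by positivity
  have h4 : 4 * θ / C = 4 * (θ / C) := by ring
  constructor
  · rw [key, abs_le]
    constructor <;> linarith
  · intro hC8
    rw [key]
    have : θ / C < 1 / 8 := by rw [div_lt_iff₀ hC]; linarith
    linarith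
end

section
/- Let $h: \mathbb{R}\to\mathbb{R}$ be Lipschitz, $\tilde\Gamma$ an $(n+N)\times(n+N)$ complex matrix, and for an $n\times N$ complex matrix $B$ define the Hermitian matrix $\mathcal{M}(B) = \begin{pmatrix} 0_{n\times n} & B \\ B^* & 0_{N\times N}\end{pmatrix}$. Then the map $B \mapsto \mathrm{Tr}[h(\mathcal{M}(B))\tilde\Gamma]$, viewed as a function of the real variables $(\Re B_{ij}, \Im B_{ij})$, is Lipschitz with constant at most $\sqrt{2}\,\|\tilde\Gamma\|_2\, \|h\|_{Lip}$. -/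
open Matrix

/-- The Hilbert–Schmidt norm of a complex matrix. -/
noncomputable def hsNorm {m n : Type*} [Fintype m] [Fintype n] (B : Matrix m n ℂ) : ℝ :=
  Real.sqrt (∑ i, ∑ j, ‖B i j‖ ^ 2)

/-- The Hermitian dilation `𝓜(B) = [[0, B], [B^*, 0]]` of a rectangular matrix `B`. -/
def mcal {n N : ℕ} (B : Matrix (Fin n) (Fin N) ℂ) :
    Matrix (Fin n ⊕ Fin N) (Fin n ⊕ Fin N) ℂ :=
  Matrix.fromBlocks 0 B Bᴴ 0

theorem mcal_isHermitian {n N : ℕ} (B : Matrix (Fin n) (Fin N) ℂ) :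
    (mcal B).IsHermitian := by
  simp [mcal, Matrix.IsHermitian, Matrix.fromBlocks_conjTranspose]

/-! Write `A = U D Uᴴ` and `A' = V D' Vᴴ` with `U`, `V` unitary and `D`, `D'` diagonal, and put
`S = Uᴴ V`. Then `f(A) - f(A') = U (f(D) S - S f(D')) Vᴴ`, whose Hilbert–Schmidt norm squared is
`∑ i j, (f λᵢ - f μⱼ)² |Sᵢⱼ|²`; for `f = id` this is `‖A - A'‖₂²`, so an `L`-Lipschitz `f` gives
`‖f(A) - f(A')‖₂ ≤ L ‖A - A'‖₂`. The dilation doubles the squared norm,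
`‖𝓜(B) - 𝓜(B')‖₂ = √2 ‖B - B'‖₂`, and Cauchy–Schwarz gives `|Tr (X Γ)| ≤ ‖X‖₂ ‖Γ‖₂`. -/

lemma Unitary.mul_mul_star_sub_mul_mul_star {R : Type*} [Ring R] [StarMul R] {u v : R}
    (hu : u ∈ unitary R) (hv : v ∈ unitary R) (a b : R) :
    u * a * star u - v * b * star v = u * (a * (star u * v) - star u * v * b) * star v := by
  simp only [mul_sub, sub_mul, ← mul_assoc, Unitary.mul_star_self_of_mem hu, one_mul]
  simp only [mul_assoc, Unitary.mul_star_self_of_mem hv, mul_one]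

section HilbertSchmidt

variable {m n ι : Type*} [Fintype m] [Fintype n] [Fintype ι]

lemma hsNorm_nonneg (X : Matrix m n ℂ) : 0 ≤ hsNorm X :=
  Real.sqrt_nonneg _

lemma hsNorm_sq (X : Matrix m n ℂ) : hsNorm X ^ 2 = ∑ i, ∑ j, ‖X i j‖ ^ 2 :=
  Real.sq_sqrt (by positivity)

lemma hsNorm_eq_sqrt_re_trace (X : Matrix m n ℂ) : hsNorm X = √(Xᴴ * X).trace.re := by
  rw [hsNorm, Finset.sum_comm]
  simp only [trace, diag, mul_apply, conjTranspose_apply, Complex.re_sum, Complex.sq_norm,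
    Complex.normSq_apply, Complex.mul_re, Complex.star_def, Complex.conj_re, Complex.conj_im]
  ring_nf

lemma hsNorm_unitary_mul_mul_unitary [DecidableEq m] [DecidableEq n] {U : Matrix m m ℂ}
    {V : Matrix n n ℂ} (hU : U ∈ unitaryGroup m ℂ) (hV : V ∈ unitaryGroup n ℂ)
    (X : Matrix m n ℂ) : hsNorm (U * X * V) = hsNorm X := by
  have hUU : Uᴴ * U = 1 := mem_unitaryGroup_iff'.mp hU
  have hVV : V * Vᴴ = 1 := mem_unitaryGroup_iff.mp hV
  have hconj : (U * X * V)ᴴ * (U * X * V) = Vᴴ * (Xᴴ * X * V) := by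
    simp only [conjTranspose_mul, Matrix.mul_assoc, ← Matrix.mul_assoc Uᴴ, hUU, Matrix.one_mul]
  rw [hsNorm_eq_sqrt_re_trace, hsNorm_eq_sqrt_re_trace, hconj, trace_mul_comm, Matrix.mul_assoc,
    hVV, Matrix.mul_one]

lemma norm_trace_mul_le (X G : Matrix ι ι ℂ) : ‖(X * G).trace‖ ≤ hsNorm X * hsNorm G := by
  calc ‖(X * G).trace‖ ≤ ∑ i, ∑ j, ‖X i j‖ * ‖G j i‖ := by
        refine (norm_sum_le _ _).trans (Finset.sum_le_sum fun i _ => ?_)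
        rw [diag_apply, mul_apply]
        simpa only [norm_mul] using norm_sum_le Finset.univ fun j => X i j * G j i
    _ = ∑ p : ι × ι, ‖X p.1 p.2‖ * ‖G p.2 p.1‖ := (Fintype.sum_prod_type' _).symm
    _ ≤ √(∑ p : ι × ι, ‖X p.1 p.2‖ ^ 2) * √(∑ p : ι × ι, ‖G p.2 p.1‖ ^ 2) :=
        Real.sum_mul_le_sqrt_mul_sqrt _ _ _
    _ = hsNorm X * hsNorm G := by
        simp only [Fintype.sum_prod_type]
        rw [hsNorm, hsNorm, Finset.sum_comm (f := fun i j => ‖G j i‖ ^ 2)]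

lemma hsNorm_diagonal_mul_sub_mul_diagonal_sq [DecidableEq ι] (d d' : ι → ℝ) (S : Matrix ι ι ℂ) :
    hsNorm (diagonal (RCLike.ofReal ∘ d) * S - S * diagonal (RCLike.ofReal ∘ d')) ^ 2 =
      ∑ i, ∑ j, (d i - d' j) ^ 2 * ‖S i j‖ ^ 2 := by
  rw [hsNorm_sq]
  refine Finset.sum_congr rfl fun i _ => Finset.sum_congr rfl fun j _ => ?_
  have hentry : (diagonal (RCLike.ofReal ∘ d) * S - S * diagonal (RCLike.ofReal ∘ d') :
      Matrix ι ι ℂ) i j =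
      RCLike.ofReal (d i - d' j) * S i j := by
    simp only [Matrix.sub_apply, diagonal_mul, mul_diagonal, Function.comp_apply,
      RCLike.ofReal_sub]
    ring
  rw [hentry, norm_mul, mul_pow, RCLike.norm_ofReal, sq_abs]

end HilbertSchmidt

namespace Matrix.IsHermitian

variable {ι : Type*} [Fintype ι] [DecidableEq ι] {A A' : Matrix ι ι ℂ}

lemma cfc_id (hA : A.IsHermitian) : hA.cfc id = A :=
  hA.spectral_theorem.symm

lemma hsNorm_cfc_sub_cfc_sq (hA : A.IsHermitian) (hA' : A'.IsHermitian) (f : ℝ → ℝ) :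
    hsNorm (hA.cfc f - hA'.cfc f) ^ 2 =
      ∑ i, ∑ j, (f (hA.eigenvalues i) - f (hA'.eigenvalues j)) ^ 2 *
        ‖(star (hA.eigenvectorUnitary : Matrix ι ι ℂ) * hA'.eigenvectorUnitary) i j‖ ^ 2 := by
  have hU := hA.eigenvectorUnitary.2
  have hV := hA'.eigenvectorUnitary.2
  rw [IsHermitian.cfc, IsHermitian.cfc, Unitary.conjStarAlgAut_apply,
    Unitary.conjStarAlgAut_apply, Unitary.mul_mul_star_sub_mul_mul_star hU hV,
    hsNorm_unitary_mul_mul_unitary hU (Unitary.star_mem hV)]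
  exact hsNorm_diagonal_mul_sub_mul_diagonal_sq _ _ _

lemma hsNorm_cfc_sub_cfc_le (hA : A.IsHermitian) (hA' : A'.IsHermitian) {f : ℝ → ℝ}
    {L : NNReal} (hf : LipschitzWith L f) :
    hsNorm (hA.cfc f - hA'.cfc f) ≤ L * hsNorm (A - A') := by
  refine le_of_pow_le_pow_left₀ two_ne_zero (mul_nonneg L.coe_nonneg (hsNorm_nonneg _)) ?_
  conv_rhs => rw [mul_pow, ← hA.cfc_id, ← hA'.cfc_id, hsNorm_cfc_sub_cfc_sq, Finset.mul_sum]
  rw [hsNorm_cfc_sub_cfc_sq]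
  refine Finset.sum_le_sum fun i _ => ?_
  rw [Finset.mul_sum]
  refine Finset.sum_le_sum fun j _ => ?_
  rw [← mul_assoc]
  gcongr
  have hd :=
    pow_le_pow_left₀ dist_nonneg (hf.dist_le_mul (hA.eigenvalues i) (hA'.eigenvalues j)) 2
  rwa [mul_pow, Real.dist_eq, Real.dist_eq, sq_abs, sq_abs] at hd

end Matrix.IsHermitian

lemma mcal_sub {n N : ℕ} (B B' : Matrix (Fin n) (Fin N) ℂ) :
    mcal B - mcal B' = mcal (B - B') := by
  ext (i | i) (j | j) <;> simp [mcal]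

lemma hsNorm_mcal {n N : ℕ} (B : Matrix (Fin n) (Fin N) ℂ) : hsNorm (mcal B) = √2 * hsNorm B := by
  rw [hsNorm, hsNorm, ← Real.sqrt_mul zero_le_two]
  congr 1
  simp only [mcal, Fintype.sum_sum_type, fromBlocks_apply₁₁, fromBlocks_apply₁₂,
    fromBlocks_apply₂₁, fromBlocks_apply₂₂, Matrix.zero_apply, norm_zero, conjTranspose_apply,
    norm_star, ne_eq, OfNat.ofNat_ne_zero, not_false_eq_true, zero_pow, Finset.sum_const_zero,
    zero_add, add_zero]
  rw [Finset.sum_comm (f := fun (j : Fin N) (i : Fin n) => ‖B i j‖ ^ 2), two_mul]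

/-- The map `B ↦ Tr[h(𝓜(B)) Γ̃]`, as a function of the real and imaginary parts of the
entries of `B` (whose Euclidean norm is the Hilbert–Schmidt norm of `B`), is Lipschitz with
constant at most `√2 ‖Γ̃‖₂ ‖h‖_Lip`. -/
theorem trace_funcCalc_lipschitz {n N : ℕ} (h : ℝ → ℝ) (L : NNReal)
    (hh : LipschitzWith L h) (Γ : Matrix (Fin n ⊕ Fin N) (Fin n ⊕ Fin N) ℂ)
    (B B' : Matrix (Fin n) (Fin N) ℂ) :
    ‖Matrix.trace ((mcal_isHermitian B).cfc h * Γ) -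
        Matrix.trace ((mcal_isHermitian B').cfc h * Γ)‖ ≤
      Real.sqrt 2 * hsNorm Γ * (L : ℝ) * hsNorm (B - B') := by
  calc ‖((mcal_isHermitian B).cfc h * Γ).trace - ((mcal_isHermitian B').cfc h * Γ).trace‖
      = ‖(((mcal_isHermitian B).cfc h - (mcal_isHermitian B').cfc h) * Γ).trace‖ := by
        rw [Matrix.sub_mul, trace_sub]
    _ ≤ hsNorm ((mcal_isHermitian B).cfc h - (mcal_isHermitian B').cfc h) * hsNorm Γ :=
        norm_trace_mul_le _ _
    _ ≤ L * hsNorm (mcal B - mcal B') * hsNorm Γ := by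
        gcongr
        · exact hsNorm_nonneg Γ
        · exact (mcal_isHermitian B).hsNorm_cfc_sub_cfc_le (mcal_isHermitian B') hh
    _ = √2 * hsNorm Γ * L * hsNorm (B - B') := by
        rw [mcal_sub, hsNorm_mcal]
        ring
end

section
/- Let $\mu$ be a probability measure on $\mathbb{R}$ supported in $[0,+\infty)$ with Stieltjes transform $g_\mu(z) = \int (z-t)^{-1} d\mu(t)$, and let $\sigma > 0$, $c \in (0,1]$. Then for every $z \in \mathbb{C}\setminus\mathbb{R}$, $|1 - \sigma^2 c\, g_\mu(z)| \geq |\Im z|/|z|$, i.e. $\frac{1}{|1-\sigma^2 c\, g_\mu(z)|} \leq \frac{|z|}{|\Im z|}$. -/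
/-!
For real `t ≥ 0`, the imaginary part of `z / (z - t) = 1 + t / (z - t)` has the sign opposite
to `Im z`; integrating against `μ`, so does `Im (z g_μ(z))`. Hence in
`Im (z (1 - a g_μ(z))) = Im z - a Im (z g_μ(z))` with `a = σ² c ≥ 0` the two terms reinforce each
other, giving `|Im z| ≤ |z| ‖1 - a g_μ(z)‖`.
-/

open MeasureTheory

noncomputable def stieltjesTransform (μ : Measure ℝ) (z : ℂ) : ℂ :=
  ∫ t, (z - (t : ℂ))⁻¹ ∂μ

namespace Complex

theorem im_mul_inv_sub_ofReal (z : ℂ) (t : ℝ) :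
    (z * (z - t)⁻¹).im = -(z.im * t) / normSq (z - t) := by
  simp only [mul_im, inv_re, inv_im, sub_re, sub_im, ofReal_re, ofReal_im, sub_zero]
  ring

theorem im_mul_im_mul_inv_sub_ofReal_nonpos (z : ℂ) {t : ℝ} (ht : 0 ≤ t) :
    z.im * (z * (z - t)⁻¹).im ≤ 0 := by
  rw [im_mul_inv_sub_ofReal, mul_div_assoc']
  exact div_nonpos_of_nonpos_of_nonneg (by nlinarith [sq_nonneg z.im]) (normSq_nonneg _)

theorem norm_inv_sub_ofReal_le {z : ℂ} (hz : z.im ≠ 0) (t : ℝ) :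
    ‖(z - t)⁻¹‖ ≤ |z.im|⁻¹ := by
  rw [norm_inv]
  refine inv_anti₀ (abs_pos.mpr hz) ?_
  simpa using abs_im_le_norm (z - t)

end Complex

theorem integrable_inv_sub_ofReal (μ : Measure ℝ) [IsFiniteMeasure μ] {z : ℂ} (hz : z.im ≠ 0) :
    Integrable (fun t : ℝ => (z - (t : ℂ))⁻¹) μ := by
  have hne : ∀ t : ℝ, z - (t : ℂ) ≠ 0 := fun t h => hz (by simpa using congrArg Complex.im h)
  have hcont : Continuous fun t : ℝ => (z - (t : ℂ))⁻¹ :=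
    (continuous_const.sub Complex.continuous_ofReal).inv₀ hne
  exact (integrable_const |z.im|⁻¹).mono' hcont.aestronglyMeasurable
    (Filter.Eventually.of_forall (Complex.norm_inv_sub_ofReal_le hz))

theorem im_mul_im_mul_stieltjesTransform_nonpos (μ : Measure ℝ) [IsFiniteMeasure μ]
    (hsupp : μ (Set.Iio 0) = 0) {z : ℂ} (hz : z.im ≠ 0) :
    z.im * (z * stieltjesTransform μ z).im ≤ 0 := by
  have hnonneg : ∀ᵐ t ∂μ, 0 ≤ t := ae_iff.mpr (by simp only [not_le]; exact hsupp)
  have him : (∫ t, z * (z - (t : ℂ))⁻¹ ∂μ).im = ∫ t, (z * (z - (t : ℂ))⁻¹).im ∂μ :=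
    (integral_im ((integrable_inv_sub_ofReal μ hz).const_mul z)).symm
  rw [stieltjesTransform, ← integral_const_mul, him, ← integral_const_mul]
  exact integral_nonpos_of_ae (hnonneg.mono fun t ht =>
    Complex.im_mul_im_mul_inv_sub_ofReal_nonpos z ht)

theorem abs_le_abs_sub_of_mul_nonpos {x y : ℝ} (h : x * y ≤ 0) : |x| ≤ |x - y| :=
  sq_le_sq.mp (by nlinarith [sq_nonneg y])

theorem abs_im_le_norm_mul_norm_one_sub {z g : ℂ} {a : ℝ} (ha : 0 ≤ a)
    (h : z.im * (z * g).im ≤ 0) : |z.im| ≤ ‖z‖ * ‖1 - a * g‖ := by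
  have him : (z * (1 - a * g)).im = z.im - a * (z * g).im := by
    rw [show z * (1 - a * g) = z - a * (z * g) by ring]
    simp
  calc |z.im| ≤ |z.im - a * (z * g).im| :=
        abs_le_abs_sub_of_mul_nonpos (by nlinarith [mul_nonpos_iff.mp h])
    _ = |(z * (1 - a * g)).im| := by rw [him]
    _ ≤ ‖z * (1 - a * g)‖ := Complex.abs_im_le_norm _
    _ = ‖z‖ * ‖1 - a * g‖ := norm_mul _ _

theorem one_sub_stieltjes_lower_bound_general (μ : Measure ℝ) [IsProbabilityMeasure μ]
    (hsupp : μ (Set.Iio 0) = 0) (σ c : ℝ) (hc0 : 0 < c)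
    (z : ℂ) (hz : z.im ≠ 0) :
    |z.im| / ‖z‖ ≤
        ‖1 - ((σ ^ 2 * c : ℝ) : ℂ) * ∫ t, (z - (t : ℂ))⁻¹ ∂μ‖ ∧
      (‖1 - ((σ ^ 2 * c : ℝ) : ℂ) * ∫ t, (z - (t : ℂ))⁻¹ ∂μ‖)⁻¹ ≤
        ‖z‖ / |z.im| := by
  have hz_norm : 0 < ‖z‖ := norm_pos_iff.mpr fun h => hz (by simp [h])
  have key : |z.im| ≤ ‖z‖ * ‖1 - ((σ ^ 2 * c : ℝ) : ℂ) * stieltjesTransform μ z‖ :=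
    abs_im_le_norm_mul_norm_one_sub (by positivity)
      (im_mul_im_mul_stieltjesTransform_nonpos μ hsupp hz)
  have lower : |z.im| / ‖z‖ ≤ ‖1 - ((σ ^ 2 * c : ℝ) : ℂ) * stieltjesTransform μ z‖ := by
    rwa [div_le_iff₀' hz_norm]
  refine ⟨lower, ?_⟩
  calc _ ≤ (|z.im| / ‖z‖)⁻¹ := inv_anti₀ (by positivity) lower
    _ = ‖z‖ / |z.im| := inv_div _ _

/-- If `μ` is a probability measure supported in `[0,∞)` with Stieltjes transform `g_μ`,
`σ > 0` and `c ∈ (0,1]`, then for nonreal `z`, `|1 - σ²c g_μ(z)| ≥ |Im z|/|z|`, i.e.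
`|1 - σ²c g_μ(z)|⁻¹ ≤ |z|/|Im z|`. -/
theorem one_sub_stieltjes_lower_bound (μ : Measure ℝ) [IsProbabilityMeasure μ]
    (hsupp : μ (Set.Iio 0) = 0) (σ c : ℝ) (hσ : 0 < σ) (hc0 : 0 < c) (hc1 : c ≤ 1)
    (z : ℂ) (hz : z.im ≠ 0) :
    |z.im| / ‖z‖ ≤
        ‖1 - ((σ ^ 2 * c : ℝ) : ℂ) * ∫ t, (z - (t : ℂ))⁻¹ ∂μ‖ ∧
      (‖1 - ((σ ^ 2 * c : ℝ) : ℂ) * ∫ t, (z - (t : ℂ))⁻¹ ∂μ‖)⁻¹ ≤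
        ‖z‖ / |z.im| :=
  one_sub_stieltjes_lower_bound_general μ hsupp σ c hc0 z hz
end
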